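/- Finite-time convergence into the invariant set (Lemma 2, claim ii): let x(k) be the GRU state trajectory generated from an arbitrary initial state x̄ ∈ ℝ^{n_x} by an input sequence u with ‖u(t)‖_∞ ≤ 1 for all t. Then there exists a finite k̄ ≥ 0, depending only on x̄ and the GRU weights (in particular not on the input sequence), such that ‖x(k)‖_∞ ≤ 1 for all k ≥ k̄. -/

import Mathlib

open Real Filter

/-- The sigmoid activation function. -/
noncomputable def sigmoid (s : ℝ) : ℝ := 1 / (1 + Real.exp (-s))

/-- Induced infinity norm of a matrix (maximum absolute row sum). -/
noncomputable def matNorm {n m : ℕ} (A : Matrix (Fin n) (Fin m) ℝ) : ℝ :=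
  ⨆ i, ∑ j, |A i j|

/-- Infinity norm of the horizontal concatenation `[A B c]`
(maximum absolute row sum of the concatenated matrix). -/
noncomputable def catNorm {n m p : ℕ} (A : Matrix (Fin n) (Fin m) ℝ)
    (B : Matrix (Fin n) (Fin p) ℝ) (c : Fin n → ℝ) : ℝ :=
  ⨆ i, (∑ j, |A i j| + ∑ j, |B i j| + |c i|)

/-- One step of the single-layer GRU:
`x⁺ = z ∘ x + (1 - z) ∘ tanh(W_r u + U_r (f ∘ x) + b_r)`,
`z = σ(W_z u + U_z x + b_z)`, `f = σ(W_f u + U_f x + b_f)`. -/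
noncomputable def gruStep {nu nx : ℕ}
    (Wz Wf Wr : Matrix (Fin nx) (Fin nu) ℝ)
    (Uz Uf Ur : Matrix (Fin nx) (Fin nx) ℝ)
    (bz bf br : Fin nx → ℝ)
    (u : Fin nu → ℝ) (x : Fin nx → ℝ) : Fin nx → ℝ :=
  let z : Fin nx → ℝ := fun i => _root_.sigmoid ((Wz.mulVec u + Uz.mulVec x + bz) i)
  let f : Fin nx → ℝ := fun i => _root_.sigmoid ((Wf.mulVec u + Uf.mulVec x + bf) i)
  let r : Fin nx → ℝ := fun i => Real.tanh ((Wr.mulVec u + Ur.mulVec (f * x) + br) i)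
  fun j => z j * x j + (1 - z j) * r j

/-!
The update gate `z` lies in `(0, 1)` and `|tanh| < 1`, so each component of the next state is a
convex combination of `x j` and a number of modulus below `1`; hence `M = max ‖x̄‖ 1` bounds the
whole trajectory. Bounded inputs and states bound the pre-activations of `z` and of the candidate
by constants depending only on `M` and the weights, so `z ≤ ρ < 1` and `|tanh(…)| ≤ τ < 1`.
Then the excess `‖x k‖ - τ` contracts by the factor `ρ` at each step and eventually drops below
`1 - τ`, uniformly in the input.
-/

open scoped Matrix

lemma sigmoid_eq_real_sigmoid : _root_.sigmoid = Real.sigmoid := by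
  funext s
  rw [_root_.sigmoid, Real.sigmoid_def, one_div]

namespace Real

lemma tanh_le_tanh {a b : ℝ} (h : a ≤ b) : tanh a ≤ tanh b := by
  rwa [← artanh_le_artanh_iff ⟨neg_one_lt_tanh a, tanh_lt_one a⟩
    ⟨neg_one_lt_tanh b, tanh_lt_one b⟩, artanh_tanh, artanh_tanh]

lemma abs_tanh_le_tanh {a C : ℝ} (h : |a| ≤ C) : |tanh a| ≤ tanh C := by
  rw [abs_le] at h ⊢
  exact ⟨by simpa only [tanh_neg] using tanh_le_tanh h.1, tanh_le_tanh h.2⟩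

end Real

lemma abs_mul_add_one_sub_mul_le {z x r m t : ℝ} (hz₀ : 0 ≤ z) (hz₁ : z ≤ 1)
    (hx : |x| ≤ m) (hr : |r| ≤ t) : |z * x + (1 - z) * r| ≤ z * m + (1 - z) * t := by
  calc |z * x + (1 - z) * r| ≤ z * |x| + (1 - z) * |r| := by
        grw [abs_add_le, abs_mul, abs_mul, abs_of_nonneg hz₀, abs_of_nonneg (sub_nonneg.2 hz₁)]
    _ ≤ z * m + (1 - z) * t := by gcongr

lemma max_le_pow_mul_of_le_mul_max {e : ℕ → ℝ} {c : ℝ} (hc : 0 ≤ c)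
    (he : ∀ k, e (k + 1) ≤ c * max (e k) 0) (k : ℕ) : max (e k) 0 ≤ c ^ k * max (e 0) 0 := by
  induction k with
  | zero => simp
  | succ k ih =>
    calc max (e (k + 1)) 0 ≤ c * max (e k) 0 := max_le (he k) (by positivity)
      _ ≤ c * (c ^ k * max (e 0) 0) := by gcongr
      _ = c ^ (k + 1) * max (e 0) 0 := by ring

section MatNorm

variable {n m : ℕ}

lemma matNorm_nonneg (A : Matrix (Fin n) (Fin m) ℝ) : 0 ≤ matNorm A :=
  Real.iSup_nonneg fun _ => Finset.sum_nonneg fun _ _ => abs_nonneg _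

lemma norm_mulVec_le_matNorm_mul (A : Matrix (Fin n) (Fin m) ℝ) (v : Fin m → ℝ) :
    ‖A *ᵥ v‖ ≤ matNorm A * ‖v‖ := by
  refine (pi_norm_le_iff_of_nonneg (by positivity [matNorm_nonneg A])).2 fun i => ?_
  have hrow : ∑ j, |A i j| ≤ matNorm A :=
    le_ciSup (f := fun i => ∑ j, |A i j|) (Set.finite_range _).bddAbove i
  calc ‖(A *ᵥ v) i‖ ≤ ∑ j, |A i j| * ‖v‖ := by
        rw [Real.norm_eq_abs, Matrix.mulVec, dotProduct]
        refine (Finset.abs_sum_le_sum_abs _ _).trans (Finset.sum_le_sum fun j _ => ?_)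
        rw [abs_mul, ← Real.norm_eq_abs (v j)]
        gcongr
        exact norm_le_pi_norm v j
    _ ≤ matNorm A * ‖v‖ := by rw [← Finset.sum_mul]; gcongr

lemma norm_mulVec_add_mulVec_add_le {p : ℕ} (W : Matrix (Fin n) (Fin m) ℝ)
    (U : Matrix (Fin n) (Fin p) ℝ) (b : Fin n → ℝ) {u : Fin m → ℝ} {w : Fin p → ℝ} {M : ℝ}
    (hu : ‖u‖ ≤ 1) (hw : ‖w‖ ≤ M) :
    ‖W *ᵥ u + U *ᵥ w + b‖ ≤ matNorm W + matNorm U * M + ‖b‖ := by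
  grw [norm_add₃_le, norm_mulVec_le_matNorm_mul, norm_mulVec_le_matNorm_mul, hu, hw, mul_one]
  all_goals exact matNorm_nonneg _

end MatNorm

lemma abs_apply_le_of_norm_le {n : ℕ} {v : Fin n → ℝ} {C : ℝ} (hv : ‖v‖ ≤ C) (i : Fin n) :
    |v i| ≤ C :=
  (Real.norm_eq_abs (v i) ▸ norm_le_pi_norm v i).trans hv

section GRU

variable {nu nx : ℕ} (Wz Wf Wr : Matrix (Fin nx) (Fin nu) ℝ)
  (Uz Uf Ur : Matrix (Fin nx) (Fin nx) ℝ) (bz bf br : Fin nx → ℝ)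

/-- The bound `ρ(M)` on the update gate `z` when `‖u‖ ≤ 1` and `‖x‖ ≤ M`. -/
noncomputable def gruGateBound (M : ℝ) : ℝ :=
  Real.sigmoid (matNorm Wz + matNorm Uz * M + ‖bz‖)

/-- The bound `τ(M)` on the candidate state `tanh(…)` when `‖u‖ ≤ 1` and `‖x‖ ≤ M`. -/
noncomputable def gruCandidateBound (M : ℝ) : ℝ :=
  tanh (matNorm Wr + matNorm Ur * M + ‖br‖)

lemma gruStep_apply (u : Fin nu → ℝ) (x : Fin nx → ℝ) (j : Fin nx) :
    gruStep Wz Wf Wr Uz Uf Ur bz bf br u x j =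
      Real.sigmoid ((Wz *ᵥ u + Uz *ᵥ x + bz) j) * x j +
        (1 - Real.sigmoid ((Wz *ᵥ u + Uz *ᵥ x + bz) j)) *
          tanh ((Wr *ᵥ u + Ur *ᵥ ((fun i => Real.sigmoid ((Wf *ᵥ u + Uf *ᵥ x + bf) i)) * x)
            + br) j) := by
  simp only [gruStep, sigmoid_eq_real_sigmoid]

variable {Wz Wf Wr Uz Uf Ur bz bf br}

lemma norm_gruStep_le {u : Fin nu → ℝ} {x : Fin nx → ℝ} {M : ℝ} (hM : 1 ≤ M) (hx : ‖x‖ ≤ M) :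
    ‖gruStep Wz Wf Wr Uz Uf Ur bz bf br u x‖ ≤ M := by
  refine (pi_norm_le_iff_of_nonneg (by linarith)).2 fun j => ?_
  rw [Real.norm_eq_abs, gruStep_apply]
  refine (abs_mul_add_one_sub_mul_le (sigmoid_nonneg _) (sigmoid_le_one _)
    (abs_apply_le_of_norm_le hx j) (abs_tanh_lt_one _).le).trans ?_
  have hz := sigmoid_le_one ((Wz *ᵥ u + Uz *ᵥ x + bz) j)
  nlinarith

lemma norm_gruStep_sub_le {u : Fin nu → ℝ} {x : Fin nx → ℝ} {M : ℝ} (hu : ‖u‖ ≤ 1)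
    (hx : ‖x‖ ≤ M) :
    ‖gruStep Wz Wf Wr Uz Uf Ur bz bf br u x‖ - gruCandidateBound Wr Ur br M ≤
      gruGateBound Wz Uz bz M * max (‖x‖ - gruCandidateBound Wr Ur br M) 0 := by
  set τ := gruCandidateBound Wr Ur br M
  set ρ := gruGateBound Wz Uz bz M
  have hτ : 0 ≤ τ := by
    rw [← tanh_zero]
    exact tanh_le_tanh
      (by positivity [matNorm_nonneg Wr, matNorm_nonneg Ur, (norm_nonneg x).trans hx])
  have hfx : ‖(fun i => Real.sigmoid ((Wf *ᵥ u + Uf *ᵥ x + bf) i)) * x‖ ≤ M := by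
    refine (pi_norm_le_iff_of_nonneg ((norm_nonneg x).trans hx)).2 fun i => ?_
    rw [Pi.mul_apply, norm_mul, Real.norm_of_nonneg (sigmoid_nonneg _)]
    exact (mul_le_of_le_one_left (norm_nonneg _) (sigmoid_le_one _)).trans
      ((norm_le_pi_norm x i).trans hx)
  rw [sub_le_iff_le_add']
  refine (pi_norm_le_iff_of_nonneg
    (add_nonneg hτ (mul_nonneg (sigmoid_nonneg _) (le_max_right _ _)))).2 fun j => ?_
  rw [Real.norm_eq_abs, gruStep_apply]
  set z := Real.sigmoid ((Wz *ᵥ u + Uz *ᵥ x + bz) j)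
  have hzρ : z ≤ ρ := sigmoid_le (le_of_abs_le
    (abs_apply_le_of_norm_le (norm_mulVec_add_mulVec_add_le Wz Uz bz hu hx) j))
  have hr := abs_tanh_le_tanh
    (abs_apply_le_of_norm_le (norm_mulVec_add_mulVec_add_le Wr Ur br hu hfx) j)
  calc _ ≤ z * ‖x‖ + (1 - z) * τ := abs_mul_add_one_sub_mul_le (sigmoid_nonneg _)
        (sigmoid_le_one _) (abs_apply_le_of_norm_le le_rfl j) hr
    _ = τ + z * (‖x‖ - τ) := by ring
    _ ≤ τ + z * max (‖x‖ - τ) 0 := by gcongr; exacts [sigmoid_nonneg _, le_max_left _ _]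
    _ ≤ τ + ρ * max (‖x‖ - τ) 0 := by gcongr

end GRU

/-- **Lemma 2, claim (ii): finite-time convergence into the invariant set.**
For any initial state `x̄` there exists a finite `k̄` (depending only on `x̄` and the
GRU weights, not on the input sequence) such that any trajectory started at `x̄` and
driven by unity-bounded inputs satisfies `‖x(k)‖_∞ ≤ 1` for all `k ≥ k̄`. -/
theorem gru_finite_time_convergence {nu nx : ℕ}
    (Wz Wf Wr : Matrix (Fin nx) (Fin nu) ℝ)
    (Uz Uf Ur : Matrix (Fin nx) (Fin nx) ℝ)
    (bz bf br : Fin nx → ℝ)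
    (xbar : Fin nx → ℝ) :
    ∃ kbar : ℕ, ∀ u : ℕ → Fin nu → ℝ, (∀ t, ‖u t‖ ≤ 1) →
      ∀ x : ℕ → Fin nx → ℝ, x 0 = xbar →
        (∀ k, x (k + 1) = gruStep Wz Wf Wr Uz Uf Ur bz bf br (u k) (x k)) →
          ∀ k, kbar ≤ k → ‖x k‖ ≤ 1 := by
  set M := max ‖xbar‖ 1
  set ρ := gruGateBound Wz Uz bz M
  set τ := gruCandidateBound Wr Ur br M
  have hρ : ρ < 1 := sigmoid_lt_one _
  have hτ : τ < 1 := tanh_lt_one _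
  obtain ⟨kbar, hkbar⟩ := eventually_atTop.1 <|
    ((tendsto_pow_atTop_nhds_zero_of_lt_one (sigmoid_nonneg _) hρ).mul_const
      (max (‖xbar‖ - τ) 0)).eventually (gt_mem_nhds (a := 1 - τ) (by simpa using hτ))
  refine ⟨kbar, fun u hu x hx₀ hstep k hk => ?_⟩
  have hbdd : ∀ k, ‖x k‖ ≤ M := fun k => by
    induction k with
    | zero => exact hx₀ ▸ le_max_left _ _
    | succ k ih => exact hstep k ▸ norm_gruStep_le (le_max_right _ _) ih
  have hdecay := max_le_pow_mul_of_le_mul_max (e := fun k => ‖x k‖ - τ) (sigmoid_nonneg _)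
    (fun k => hstep k ▸ norm_gruStep_sub_le (hu k) (hbdd k)) k
  rw [hx₀] at hdecay
  linarith [le_max_left (‖x k‖ - τ) 0, hkbar k hk]
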